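/- arXiv:1504.00260 — 4 statements merged into one kernel-verified Lean document; each statement's English description precedes it below -/
import Mathlib

section
/- Let K be a positive semidefinite symmetric bilinear form on a real vector space V with basis {α_i : i ∈ I}, whose kernel is one-dimensional, spanned by a vector δ = Σ_i c_i α_i whose coordinates c_i are all strictly positive. Then for every proper subset J ⊊ I, the restriction of K to the span V_J of {α_j : j ∈ J} is positive definite. -/
/-!
If `K x x = 0` for a positive semidefinite symmetric form, Cauchy–Schwarz puts `x` in the kernel
of `K`, so `x` is a multiple `r • δ`. If moreover `x` lies in `V_J` with `J ⊊ I`, its coordinate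
at some `i ∉ J` vanishes; that coordinate is `r * c i` with `c i > 0`, so `r = 0` and `x = 0`.
-/

section CauchySchwarz

variable {𝕜 V : Type*} [Field 𝕜] [LinearOrder 𝕜] [IsStrictOrderedRing 𝕜]
  [AddCommGroup V] [Module 𝕜 V] {K : V →ₗ[𝕜] V →ₗ[𝕜] 𝕜}

theorem LinearMap.apply_sq_le_apply_self_mul_apply_self (hsym : ∀ x y, K x y = K y x)
    (hpsd : ∀ x, 0 ≤ K x x) (x y : V) : K x y ^ 2 ≤ K x x * K y y := by
  have hquad : ∀ t : 𝕜, 0 ≤ K y y * (t * t) + 2 * K x y * t + K x x := fun t => by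
    have hexp : K (x + t • y) (x + t • y) = K y y * (t * t) + 2 * K x y * t + K x x := by
      simp only [map_add, map_smul, LinearMap.add_apply, LinearMap.smul_apply, smul_eq_mul,
        hsym y x]
      ring
    exact hexp ▸ hpsd _
  have := discrim_le_zero hquad
  rw [discrim] at this
  linarith

theorem LinearMap.apply_eq_zero_of_apply_self_eq_zero (hsym : ∀ x y, K x y = K y x)
    (hpsd : ∀ x, 0 ≤ K x x) {x : V} (hx : K x x = 0) (y : V) : K x y = 0 := by
  have := apply_sq_le_apply_self_mul_apply_self hsym hpsd x y
  rw [hx, zero_mul] at this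
  exact pow_eq_zero_iff two_ne_zero |>.mp (le_antisymm this (sq_nonneg _))

end CauchySchwarz

theorem Module.Basis.repr_eq_zero_of_mem_span_image {ι R M : Type*} [Semiring R]
    [AddCommMonoid M] [Module R M] (b : Module.Basis ι R M) {s : Set ι} {m : M}
    (hm : m ∈ Submodule.span R (b '' s)) {i : ι} (hi : i ∉ s) : b.repr m i = 0 :=
  Finsupp.notMem_support_iff.mp fun hsupp => hi (b.mem_span_image.mp hm hsupp)

/-- If K is positive semidefinite with one-dimensional kernel
spanned by δ = Σ c_i α_i with all c_i > 0, then the restriction of K to the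
span of any proper subset of the basis is positive definite. -/
theorem proper_parabolic_positive_definite {I V : Type*} [Fintype I]
    [AddCommGroup V] [Module ℝ V]
    (α : Module.Basis I ℝ V) (K : V →ₗ[ℝ] V →ₗ[ℝ] ℝ)
    (hsym : ∀ x y, K x y = K y x) (hpsd : ∀ x, 0 ≤ K x x)
    (c : I → ℝ) (hc : ∀ i, 0 < c i)
    (hker : ∀ x : V, (∀ y, K x y = 0) ↔ ∃ r : ℝ, x = r • (∑ i, c i • α i)) :
    ∀ J : Set I, J ≠ Set.univ →
      ∀ x ∈ Submodule.span ℝ (α '' J), x ≠ 0 → 0 < K x x := by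
  intro J hJ x hx hx0
  obtain ⟨i, hiJ⟩ := Set.ne_univ_iff_exists_notMem J |>.mp hJ
  refine (hpsd x).lt_of_ne' fun hxx => hx0 ?_
  obtain ⟨r, rfl⟩ := (hker x).mp (K.apply_eq_zero_of_apply_self_eq_zero hsym hpsd hxx)
  have hri : r * c i = 0 := by
    have := α.repr_eq_zero_of_mem_span_image hx hiJ
    rwa [map_smul, Finsupp.smul_apply, α.repr_sum_self, smul_eq_mul] at this
  rw [(mul_eq_zero.mp hri).resolve_right (hc i).ne', zero_smul]
end

section
/- Let W be a Coxeter group acting on V by its reflection representation, and let c = s_1 s_2 ⋯ s_n be a Coxeter element (each simple reflection appearing exactly once). For each Coxeter element c let ω_c be the associated skew form (so that ω_c(α_i^∨, α_j) > 0 if s_i precedes s_j in every reduced word for c, and ω_c(α_i^∨, α_j) < 0 if s_j precedes s_i, and = 0 if s_i, s_j commute, with |ω_c(α_i^∨, α_j)| = |a_{ij}|). If s is initial or final in c, then ω_c(x, y) = ω_{scs}(s x, s y) for all x, y ∈ V. Consequently, applying this n times, ω_c(c x, c y) = ω_c(x, y) for all x, y ∈ V; that is, ω_c is invariant under the action of c.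 -/
/-!
On the basis, `s α_j = α_j + |b_sj| α_s` for `j ≠ s`, and when row `s` of the exchange matrix `b`
has constant sign the cross terms `|b_sj| b_si - |b_si| b_sj` cancel; this gives
`ω_b(x, y) = ω_b'(s x, s y)` where `b'` is `b` with row and column `s` negated.
Applying the reflections of `c = s_1 ⋯ s_n` one at a time, starting with `s_n`, each new letter is
a sink of the current matrix, and after the letters of a suffix `l` the matrix is `b` with the
entries between `l` and its complement negated. Once `l` contains every index this is `b` again.
-/

section

variable {I V : Type*} [AddCommGroup V] [Module ℝ V]

def IsSkewSymmetrizer (d : I → ℝ) (C : I → I → ℤ) : Prop :=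
  ∀ i j, d i * (C i j : ℝ) = -(d j * (C j i : ℝ))

namespace IsSkewSymmetrizer

variable {d : I → ℝ} {C : I → I → ℤ}

theorem diag_eq_zero (hC : IsSkewSymmetrizer d C) (hd : ∀ i, 0 < d i) (i : I) : C i i = 0 := by
  have h : d i * (C i i : ℝ) = 0 := by linarith [hC i i]
  exact_mod_cast (mul_eq_zero.mp h).resolve_left (hd i).ne'

theorem nonpos_of_nonneg_swap (hC : IsSkewSymmetrizer d C) (hd : ∀ i, 0 < d i) {i j : I}
    (h : 0 ≤ C j i) : C i j ≤ 0 := by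
  have h' : (C i j : ℝ) * d i ≤ 0 := by
    rw [mul_comm, hC i j, neg_nonpos]
    exact mul_nonneg (hd j).le (by exact_mod_cast h)
  exact_mod_cast nonpos_of_mul_nonpos_left h' (hd i)

end IsSkewSymmetrizer

theorem abs_mul_eq_abs_mul_of_same_sign {f : I → ℤ} (hf : (∀ j, 0 ≤ f j) ∨ (∀ j, f j ≤ 0))
    (i j : I) :
    |(f j : ℝ)| * f i = |(f i : ℝ)| * f j := by
  rcases hf with h | h
  · rw [abs_of_nonneg (by exact_mod_cast h j), abs_of_nonneg (by exact_mod_cast h i), mul_comm]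
  · rw [abs_of_nonpos (by exact_mod_cast h j), abs_of_nonpos (by exact_mod_cast h i)]; ring

variable [DecidableEq I]

def negRowCol (C : I → I → ℤ) (s : I) : I → I → ℤ :=
  fun i j => if i = s ∨ j = s then -C i j else C i j

def negAcross (l : List I) (C : I → I → ℤ) : I → I → ℤ :=
  fun i j => if (i ∈ l ↔ j ∈ l) then C i j else -C i j

theorem IsSkewSymmetrizer.negAcross {d : I → ℝ} {C : I → I → ℤ} (hC : IsSkewSymmetrizer d C)
    (l : List I) : IsSkewSymmetrizer d (negAcross l C) := by
  intro i j
  simp only [_root_.negAcross, iff_comm (a := j ∈ l)]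
  split_ifs
  · exact hC i j
  · push_cast; linarith [hC i j]

theorem abs_negAcross (l : List I) (C : I → I → ℤ) (i j : I) :
    |negAcross l C i j| = |C i j| := by
  unfold negAcross; split_ifs <;> simp

theorem negAcross_nil (C : I → I → ℤ) : negAcross [] C = C := by
  funext i j
  simp [negAcross]

theorem negAcross_of_forall_mem {l : List I} (hl : ∀ i, i ∈ l) (C : I → I → ℤ) :
    negAcross l C = C := by
  funext i j
  simp [negAcross, hl]

theorem negRowCol_negAcross {l : List I} {a : I} (ha : a ∉ l) {C : I → I → ℤ} (hC : C a a = 0) :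
    negRowCol (negAcross l C) a = negAcross (a :: l) C := by
  funext i j
  simp only [negRowCol, negAcross, List.mem_cons]
  by_cases hi : i = a <;> by_cases hj : j = a <;> simp_all <;> split_ifs <;> simp

theorem omega_eq_negRowCol_reflection (α : Module.Basis I ℝ V) {d : I → ℝ} (hd : ∀ i, 0 < d i)
    {C : I → I → ℤ} (hC : IsSkewSymmetrizer d C) {s : I}
    (hs : (∀ j, 0 ≤ C s j) ∨ (∀ j, C s j ≤ 0)) {r : V →ₗ[ℝ] V}
    (hr : ∀ j, r (α j) = α j - (if s = j then 2 else -|(C s j : ℝ)|) • α s)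
    {ω ω' : V →ₗ[ℝ] V →ₗ[ℝ] ℝ} (hω : ∀ i j, ω (α i) (α j) = d i * C i j)
    (hω' : ∀ i j, ω' (α i) (α j) = d i * negRowCol C s i j) (x y : V) :
    ω x y = ω' (r x) (r y) := by
  have hss := hC.diag_eq_zero hd s
  suffices ω = ω'.compl₁₂ r r by rw [this, LinearMap.compl₁₂_apply]
  refine LinearMap.ext_basis α α fun i j => ?_
  rw [LinearMap.compl₁₂_apply, hr, hr]
  simp only [map_sub, map_smul, LinearMap.sub_apply, LinearMap.smul_apply, smul_eq_mul, hω, hω',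
    negRowCol]
  rcases eq_or_ne i s with rfl | hi
  · rcases eq_or_ne j i with rfl | hj
    · simp [hss]
    · simp [hj, hj.symm, hss]
      ring
  · rcases eq_or_ne j s with rfl | hj
    · simp [hi, hi.symm, hss]
      ring
    · simp [hi, hj, hi.symm, hj.symm, hss]
      linear_combination |(C s j : ℝ)| * hC i s - d s * abs_mul_eq_abs_mul_of_same_sign hs i j

theorem omega_eq_negAcross_prod_reflections (α : Module.Basis I ℝ V) {d : I → ℝ}
    (hd : ∀ i, 0 < d i)
    (refl : I → V →ₗ[ℝ] V) {ω : (I → I → ℤ) → V →ₗ[ℝ] V →ₗ[ℝ] ℝ}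
    (hω : ∀ C i j, ω C (α i) (α j) = d i * C i j) {C : I → I → ℤ} (hC : IsSkewSymmetrizer d C)
    (hrefl : ∀ s j, refl s (α j) = α j - (if s = j then 2 else -|(C s j : ℝ)|) • α s)
    {l : List I} (hl : l.Nodup) (hpw : l.Pairwise fun a b => 0 ≤ C a b)
    (hout : ∀ a ∈ l, ∀ j ∉ l, C a j ≤ 0) (x y : V) :
    ω C x y = ω (negAcross l C) ((l.map refl).prod x) ((l.map refl).prod y) := by
  induction l with
  | nil => simp [negAcross_nil]
  | cons a t ih =>
    obtain ⟨hat, ht⟩ := List.nodup_cons.mp hl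
    obtain ⟨ha_before, hpw_t⟩ := List.pairwise_cons.mp hpw
    have hout_t : ∀ b ∈ t, ∀ j ∉ t, C b j ≤ 0 := by
      intro b hb j hj
      by_cases hja : j = a
      · subst hja
        exact hC.nonpos_of_nonneg_swap hd (ha_before b hb)
      · exact hout b (List.mem_cons_of_mem a hb) j (by simp [hja, hj])
    have hsink : ∀ j, negAcross t C a j ≤ 0 := by
      intro j
      by_cases hj : j ∈ t
      · simp [negAcross, hat, hj, ha_before j hj]
      · by_cases hja : j = a
        · simp [negAcross, hja, hC.diag_eq_zero hd]
        · simp only [negAcross, hat, hj, if_true]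
          exact hout a List.mem_cons_self j (by simp [hja, hj])
    have hrefl_t : ∀ j, refl a (α j) =
        α j - (if a = j then 2 else -|(negAcross t C a j : ℝ)|) • α a := by
      intro j
      rw [← Int.cast_abs, abs_negAcross, Int.cast_abs, hrefl]
    have hω_a : ∀ i j, ω (negAcross (a :: t) C) (α i) (α j) =
        d i * negRowCol (negAcross t C) a i j := by
      rw [negRowCol_negAcross hat (hC.diag_eq_zero hd a)]
      exact hω _
    rw [ih ht hpw_t hout_t,
      omega_eq_negRowCol_reflection α hd (hC.negAcross t) (Or.inr hsink) hrefl_t (hω _) hω_a]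
    rfl

end

-- `B` encodes `c`: `B i j ≥ 0` when `s_i` precedes `s_j`. The letter `s` is initial or final iff
-- row `s` of `B` has constant sign, and the matrix of `scs` is `B` with row and column `s` negated.
theorem omega_c_invariance_general {I V : Type*} [DecidableEq I]
    [AddCommGroup V] [Module ℝ V]
    (α : Module.Basis I ℝ V) (B : I → I → ℤ) (d : I → ℝ)
    (hd : ∀ i, 0 < d i)
    (hskew : ∀ i j, d i * (B i j : ℝ) = -(d j * (B j i : ℝ)))
    (A : I → I → ℝ) (hA : ∀ i j, A i j = if i = j then 2 else -|(B i j : ℝ)|)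
    (refl : I → V →ₗ[ℝ] V)
    (hrefl : ∀ i j, refl i (α j) = α j - A i j • α i)
    (ω : (I → I → ℤ) → V →ₗ[ℝ] V →ₗ[ℝ] ℝ)
    (hωdef : ∀ (B' : I → I → ℤ) (i j : I), ω B' (α i) (α j) = d i * (B' i j : ℝ))
    (s : I)
    (hs : (∀ j, 0 ≤ B s j) ∨ (∀ j, B s j ≤ 0)) :
    (∀ x y : V, ω B x y =
        ω (fun i j => if i = s ∨ j = s then -B i j else B i j)
          (refl s x) (refl s y))
    ∧ ∀ (n : ℕ) (σ : Fin n ≃ I),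
        (∀ i j : Fin n, i < j → 0 ≤ B (σ i) (σ j)) →
        ∀ x y : V,
          ω B ((List.ofFn fun i => refl (σ i)).prod x)
              ((List.ofFn fun i => refl (σ i)).prod y) = ω B x y := by
  have hreflB : ∀ s j, refl s (α j) = α j - (if s = j then 2 else -|(B s j : ℝ)|) • α s := by
    intro s j
    rw [hrefl, hA]
  refine ⟨omega_eq_negRowCol_reflection α hd hskew hs (hreflB s) (hωdef B) (hωdef _), ?_⟩
  intro n σ hσ x y
  have hmem : ∀ i, i ∈ List.ofFn σ := fun i => List.mem_ofFn.mpr ⟨σ.symm i, σ.apply_symm_apply i⟩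
  have h := omega_eq_negAcross_prod_reflections α hd refl hωdef hskew hreflB
    (List.nodup_ofFn.mpr σ.injective) (List.pairwise_ofFn.mpr hσ)
    (fun _ _ j hj => absurd (hmem j) hj) x y
  rw [negAcross_of_forall_mem hmem, List.map_ofFn] at h
  exact h.symm

/-- If s is initial or final in the Coxeter element c determined
by an acyclic exchange matrix B, then ω_c(x,y) = ω_{scs}(sx, sy), where the
matrix of scs is obtained from B by negating row and column s.  Consequently,
for any ordering σ of the simple reflections compatible with B (so that the
corresponding product is c), the form ω_c is invariant under c. -/
theorem omega_c_invariance {I V : Type*} [Fintype I] [DecidableEq I]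
    [AddCommGroup V] [Module ℝ V]
    (α : Module.Basis I ℝ V) (B : I → I → ℤ) (d : I → ℝ)
    (hd : ∀ i, 0 < d i)
    (hskew : ∀ i j, d i * (B i j : ℝ) = -(d j * (B j i : ℝ)))
    (A : I → I → ℝ) (hA : ∀ i j, A i j = if i = j then 2 else -|(B i j : ℝ)|)
    (refl : I → V →ₗ[ℝ] V)
    (hrefl : ∀ i j, refl i (α j) = α j - A i j • α i)
    (ω : (I → I → ℤ) → V →ₗ[ℝ] V →ₗ[ℝ] ℝ)
    (hωdef : ∀ (B' : I → I → ℤ) (i j : I), ω B' (α i) (α j) = d i * (B' i j : ℝ))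
    (s : I)
    (hs : (∀ j, 0 ≤ B s j) ∨ (∀ j, B s j ≤ 0)) :
    (∀ x y : V, ω B x y =
        ω (fun i j => if i = s ∨ j = s then -B i j else B i j)
          (refl s x) (refl s y))
    ∧ ∀ (n : ℕ) (σ : Fin n ≃ I),
        (∀ i j : Fin n, i < j → 0 ≤ B (σ i) (σ j)) →
        ∀ x y : V,
          ω B ((List.ofFn fun i => refl (σ i)).prod x)
              ((List.ofFn fun i => refl (σ i)).prod y) = ω B x y :=
  omega_c_invariance_general α B d hd hskew A hA refl hrefl ω hωdef s hs
end

section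
/- Let W be a Coxeter group, J ⊆ S, and W_J the standard parabolic subgroup generated by J. For w ∈ W let w_J denote the unique maximal element of W_J lying below w in the right weak order. Then the inversion set of w_J equals inv(w) ∩ W_J, i.e., a reflection t ∈ W_J is an inversion of w_J if and only if it is an inversion of w. -/
/-- Right weak order on a Coxeter group: `u ≤ v` iff lengths add along `u⁻¹v`. -/
def weakLE {B W : Type*} [Group W] {M : CoxeterMatrix B}
    (cs : CoxeterSystem M W) (u v : W) : Prop :=
  cs.length u + cs.length (u⁻¹ * v) = cs.length v

/-- The set of inversions of `w`: reflections `t` with ℓ(tw) < ℓ(w). -/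
def inversionSet {B W : Type*} [Group W] {M : CoxeterMatrix B}
    (cs : CoxeterSystem M W) (w : W) : Set W :=
  {t | cs.IsReflection t ∧ cs.length (t * w) < cs.length w}

/-!
`W` acts on `W × ℤˣ` by `s i • (t, ε) = (s i * t * s i, ±ε)`, the sign flipping exactly when
`t = s i`; the braid relations hold because along two periods of a dihedral group every
reflection is met an even number of times. The sign component `inversionSign w t` of this
action is a cocycle, and it is `-1` exactly when `t` is a right inversion of `w`; this gives
`N(uv) = N(u) ∆ u N(v) u⁻¹` for left inversion sets. Consequently left inversions of elements of
`W_J` lie in `W_J`, and if `x` has minimal length in `W_J x` then `ℓ(vx) = ℓ(v) + ℓ(x)` for all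
`v ∈ W_J`. Maximality of `w_J` forces `x = w_J⁻¹ w` to be such a minimal element, so for
`t ∈ W_J` we get `ℓ(tw) - ℓ(w) = ℓ(t w_J) - ℓ(w_J)`.
-/

theorem mul_mul_inv_eq_iff_eq_inv_mul_mul {G : Type*} [Group G] (g t u : G) :
    g * t * g⁻¹ = u ↔ t = g⁻¹ * u * g := by
  constructor <;> rintro rfl <;> group

theorem Finset.prod_range_two_mul {α : Type*} [CommMonoid α] (f : ℕ → α) (n : ℕ) :
    ∏ j ∈ Finset.range (2 * n), f j = ∏ k ∈ Finset.range n, f (2 * k) * f (2 * k + 1) := by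
  induction n with
  | zero => simp
  | succ n ih =>
    rw [show 2 * (n + 1) = 2 * n + 1 + 1 by ring, Finset.prod_range_succ, Finset.prod_range_succ,
      Finset.prod_range_succ, ih, mul_assoc]

theorem Int.units_mul_eq_neg_one_iff (a b : ℤˣ) : a * b = -1 ↔ Xor (a = -1) (b = -1) := by
  rcases Int.units_eq_one_or a with rfl | rfl <;> rcases Int.units_eq_one_or b with rfl | rfl <;>
    simp [Xor]

theorem Equiv.Perm.pow_apply_of_apply_eq_conj {G A : Type*} [Group G] [CommMonoid A]
    (ρ : Equiv.Perm (G × A)) (p : G) (c : G → A)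
    (hρ : ∀ t a, ρ (t, a) = (p * t * p⁻¹, a * c t)) (n : ℕ) (t : G) (a : A) :
    (ρ ^ n) (t, a) =
      (p ^ n * t * (p ^ n)⁻¹, a * ∏ k ∈ Finset.range n, c (p ^ k * t * (p ^ k)⁻¹)) := by
  induction n generalizing t a with
  | zero => simp
  | succ n ih =>
    rw [pow_succ, Equiv.Perm.mul_apply, hρ, ih, Finset.prod_range_succ']
    simp only [pow_succ, pow_zero, one_mul, inv_one, mul_one, mul_inv_rev, mul_assoc]
    ac_rfl

namespace CoxeterSystem

variable {B W : Type*} [Group W] {M : CoxeterMatrix B} (cs : CoxeterSystem M W)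

local prefix:100 "s " => cs.simple
local prefix:100 "ℓ " => cs.length

open scoped Classical

theorem simple_mul_mul_simple_eq_iff (i : B) (t u : W) :
    s i * t * s i = u ↔ t = s i * u * s i := by
  simpa using mul_mul_inv_eq_iff_eq_inv_mul_mul (s i) t u

noncomputable def simpleTwist (i : B) : Equiv.Perm (W × ℤˣ) :=
  Function.Involutive.toPerm (fun x => (s i * x.1 * s i, x.2 * if x.1 = s i then -1 else 1)) <| by
    rintro ⟨t, ε⟩
    simp only [cs.simple_mul_mul_simple_eq_iff, simple_mul_simple_cancel_right]
    split_ifs <;> simp [mul_assoc]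

theorem simpleTwist_apply (i : B) (t : W) (ε : ℤˣ) :
    cs.simpleTwist i (t, ε) = (s i * t * s i, ε * if t = s i then -1 else 1) := rfl

theorem conj_dihedral_reflection (i i' : B) (j k : ℕ) :
    ((s i * s i') ^ k)⁻¹ * ((s i' * s i) ^ j * s i') * (s i * s i') ^ k =
      (s i' * s i) ^ (j + 2 * k) * s i' := by
  induction k generalizing j with
  | zero => simp
  | succ k ih =>
    have step : (s i * s i')⁻¹ * ((s i' * s i) ^ j * s i') * (s i * s i') =
        (s i' * s i) ^ (j + 2) * s i' := by
      rw [mul_inv_rev, inv_simple, inv_simple, pow_succ, pow_succ']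
      simp only [mul_assoc]
    calc _ = ((s i * s i') ^ k)⁻¹ * ((s i * s i')⁻¹ * ((s i' * s i) ^ j * s i') * (s i * s i')) *
          (s i * s i') ^ k := by simp only [pow_succ', mul_inv_rev, mul_assoc]
      _ = _ := by rw [step, ih, add_right_comm, mul_add_one, add_assoc]

theorem isLiftable_simpleTwist : M.IsLiftable cs.simpleTwist := by
  intro i i'
  -- The `k`-th power flips the sign of `(t, ε)` once for each `j < 2k` with `t = q ^ j * s i'`;
  -- for `k = M i i'` the index `j` runs through two periods of `j ↦ q ^ j`.
  set p := s i * s i'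
  set q := s i' * s i
  let g (t : W) (j : ℕ) : ℤˣ := if t = q ^ j * s i' then -1 else 1
  have hρ : ∀ t ε, (cs.simpleTwist i * cs.simpleTwist i') (t, ε) =
      (p * t * p⁻¹, ε * (g t 0 * g t 1)) := by
    intro t ε
    simp only [Equiv.Perm.mul_apply, simpleTwist_apply, cs.simple_mul_mul_simple_eq_iff]
    simp only [g, p, q, mul_inv_rev, inv_simple, pow_zero, one_mul, pow_one, mul_assoc]
  have hg : ∀ t k, g (p ^ k * t * (p ^ k)⁻¹) 0 * g (p ^ k * t * (p ^ k)⁻¹) 1 =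
      g t (2 * k) * g t (2 * k + 1) := by
    intro t k
    have hconj (j : ℕ) : p ^ k * t * (p ^ k)⁻¹ = q ^ j * s i' ↔ t = q ^ (j + 2 * k) * s i' := by
      rw [mul_mul_inv_eq_iff_eq_inv_mul_mul, conj_dihedral_reflection]
    simp only [g, hconj, zero_add, add_comm 1]
  have hperiodic : ∀ t j, g t (M i i' + j) = g t j := by
    intro t j
    simp only [g, q, pow_add, simple_mul_simple_pow', one_mul]
  ext ⟨t, ε⟩ : 1
  rw [Equiv.Perm.pow_apply_of_apply_eq_conj _ p _ hρ, simple_mul_simple_pow, Finset.prod_congr rfl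
    (fun k _ => hg t k), ← Finset.prod_range_two_mul, two_mul, Finset.prod_range_add,
    Finset.prod_congr rfl (fun j _ => hperiodic t j), Int.units_mul_self]
  simp

/-- Tits' representation of `W` on `T × {±1}` (`T` the reflections), extended to `W × ℤˣ`. -/
noncomputable def reflectionRepresentation : W →* Equiv.Perm (W × ℤˣ) :=
  cs.lift ⟨cs.simpleTwist, cs.isLiftable_simpleTwist⟩

noncomputable def inversionSign (w t : W) : ℤˣ := (cs.reflectionRepresentation w (t, 1)).2

theorem reflectionRepresentation_apply (w t : W) (ε : ℤˣ) :
    cs.reflectionRepresentation w (t, ε) = (w * t * w⁻¹, ε * cs.inversionSign w t) := by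
  induction w using cs.simple_induction_left generalizing t ε with
  | one => simp [inversionSign]
  | mul_simple_left w i ih =>
    simp only [inversionSign, map_mul, Equiv.Perm.mul_apply, reflectionRepresentation,
      lift_apply_simple] at ih ⊢
    rw [ih, ih t 1, simpleTwist_apply, simpleTwist_apply]
    simp [mul_assoc]

theorem inversionSign_one (t : W) : cs.inversionSign 1 t = 1 := by
  simp [inversionSign]

theorem inversionSign_simple (i : B) (t : W) :
    cs.inversionSign (s i) t = if t = s i then -1 else 1 := by
  simp [inversionSign, reflectionRepresentation, simpleTwist_apply]

theorem inversionSign_mul (u v t : W) :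
    cs.inversionSign (u * v) t = cs.inversionSign u (v * t * v⁻¹) * cs.inversionSign v t := by
  have := cs.reflectionRepresentation_apply (u * v) t 1
  rw [map_mul, Equiv.Perm.mul_apply, cs.reflectionRepresentation_apply v,
    cs.reflectionRepresentation_apply u, Prod.mk.injEq] at this
  simpa [mul_comm] using this.2.symm

theorem inversionSign_self {t : W} (ht : cs.IsReflection t) : cs.inversionSign t t = -1 := by
  obtain ⟨w, i, rfl⟩ := ht
  have hconj : w⁻¹ * (w * s i * w⁻¹) * w⁻¹⁻¹ = s i := by group
  have hcancel := cs.inversionSign_mul w w⁻¹ (w * s i * w⁻¹)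
  rw [mul_inv_cancel, inversionSign_one, hconj] at hcancel
  rw [inversionSign_mul, hconj, inversionSign_mul, inversionSign_simple, inv_simple,
    simple_mul_simple_cancel_right, if_pos rfl, mul_neg_one, neg_mul, hcancel]

theorem inversionSign_eq_one_of_length_lt {w t : W} (h : ℓ w < ℓ (w * t)) :
    cs.inversionSign w t = 1 := by
  induction hn : ℓ w using Nat.strong_induction_on generalizing w t with
  | _ n ih =>
    by_cases hw : w = 1
    · rw [hw, inversionSign_one]
    obtain ⟨i, hi⟩ := cs.exists_rightDescent_of_ne_one hw
    unfold IsRightDescent at hi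
    have hwi : ℓ (w * s i) + 1 = ℓ w := by
      rcases cs.length_mul_simple w i with h' | h' <;> omega
    have hti : t ≠ s i := by rintro rfl; omega
    have hwti : ℓ (w * t) ≤ ℓ (w * t * s i) + 1 := by
      rcases cs.length_mul_simple (w * t) i with h' | h' <;> omega
    have hlt : ℓ (w * s i) < ℓ (w * s i * (s i * t * (s i)⁻¹)) := by
      rw [inv_simple, ← mul_assoc, ← mul_assoc, simple_mul_simple_cancel_right]; omega
    rw [← cs.simple_mul_simple_cancel_right (w := w) i, inversionSign_mul,
      ih _ (by omega) hlt rfl, inversionSign_simple, if_neg hti, one_mul]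

theorem inversionSign_eq_neg_one_iff {w t : W} (ht : cs.IsReflection t) :
    cs.inversionSign w t = -1 ↔ cs.IsRightInversion w t := by
  constructor
  · intro h
    refine ⟨ht, lt_of_le_of_ne (not_lt.mp fun hlt => ?_) (ht.length_mul_left_ne w)⟩
    rw [cs.inversionSign_eq_one_of_length_lt hlt] at h
    exact absurd h (by decide)
  · rintro ⟨-, hlt⟩
    have hwt : ℓ (w * t) < ℓ (w * t * t) := by rwa [mul_assoc, ht.mul_self, mul_one]
    rw [← mul_one w, ← ht.mul_self, ← mul_assoc, inversionSign_mul, mul_inv_cancel_right,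
      cs.inversionSign_eq_one_of_length_lt hwt, cs.inversionSign_self ht, one_mul]

theorem isRightInversion_mul_iff {u v t : W} (ht : cs.IsReflection t) :
    cs.IsRightInversion (u * v) t ↔
      Xor (cs.IsRightInversion u (v * t * v⁻¹)) (cs.IsRightInversion v t) := by
  rw [← cs.inversionSign_eq_neg_one_iff ht, ← cs.inversionSign_eq_neg_one_iff (ht.conj v),
    ← cs.inversionSign_eq_neg_one_iff ht, inversionSign_mul, Int.units_mul_eq_neg_one_iff]

theorem isLeftInversion_mul_iff {u v t : W} (ht : cs.IsReflection t) :
    cs.IsLeftInversion (u * v) t ↔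
      Xor (cs.IsLeftInversion u t) (cs.IsLeftInversion v (u⁻¹ * t * u)) := by
  rw [← isRightInversion_inv_iff, mul_inv_rev, cs.isRightInversion_mul_iff ht, inv_inv,
    isRightInversion_inv_iff, isRightInversion_inv_iff, xor_comm]

section Parabolic

variable {J : Set B}

def parabolicSubgroup (J : Set B) : Subgroup W := Subgroup.closure (cs.simple '' J)

theorem simple_mem_parabolicSubgroup {i : B} (hi : i ∈ J) : s i ∈ cs.parabolicSubgroup J :=
  Subgroup.subset_closure ⟨i, hi, rfl⟩

theorem parabolicSubgroup_induction_left {p : W → Prop} (one : p 1)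
    (mul_simple_left : ∀ i ∈ J, ∀ v ∈ cs.parabolicSubgroup J, p v → p (s i * v)) {v : W}
    (hv : v ∈ cs.parabolicSubgroup J) : p v := by
  induction hv using Subgroup.closure_induction_left with
  | one => exact one
  | mul_left _ hi v hv ih =>
    obtain ⟨i, hi, rfl⟩ := hi
    exact mul_simple_left i hi v hv ih
  | inv_mul_cancel _ hi v hv ih =>
    obtain ⟨i, hi, rfl⟩ := hi
    simpa only [inv_inv, inv_simple] using mul_simple_left i hi v hv ih

theorem mem_parabolicSubgroup_of_isLeftInversion {v t : W} (hv : v ∈ cs.parabolicSubgroup J)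
    (ht : cs.IsLeftInversion v t) : t ∈ cs.parabolicSubgroup J := by
  refine cs.parabolicSubgroup_induction_left
    (p := fun v => ∀ t, cs.IsLeftInversion v t → t ∈ cs.parabolicSubgroup J)
    (fun t ht => absurd ht.2 (by simp)) ?_ hv t ht
  intro i hi v hv ih t ht
  rcases (cs.isLeftInversion_mul_iff ht.1).mp ht with ⟨hsi, -⟩ | ⟨hconj, -⟩
  · have : t * s i = 1 := cs.length_eq_zero_iff.mp (by simpa [IsLeftInversion] using hsi.2)
    rw [mul_eq_one_iff_eq_inv.mp this, inv_simple]
    exact cs.simple_mem_parabolicSubgroup hi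
  · have := ih _ hconj
    rw [inv_simple] at this
    simpa [mul_assoc] using mul_mem (mul_mem (cs.simple_mem_parabolicSubgroup hi) this)
      (cs.simple_mem_parabolicSubgroup hi)

def IsMinimalCosetRep (J : Set B) (x : W) : Prop :=
  ∀ v ∈ cs.parabolicSubgroup J, ℓ x ≤ ℓ (v * x)

theorem exists_isMinimalCosetRep (J : Set B) (x : W) :
    ∃ v ∈ cs.parabolicSubgroup J, cs.IsMinimalCosetRep J (v * x) := by
  obtain ⟨v, hv, hmin⟩ := (InvImage.wf (fun v => ℓ (v * x)) wellFounded_lt).has_min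
    (cs.parabolicSubgroup J) ⟨1, one_mem _⟩
  refine ⟨v, hv, fun u hu => ?_⟩
  simpa only [InvImage, not_lt, mul_assoc] using hmin (u * v) (mul_mem hu hv)

variable {cs} in
theorem IsMinimalCosetRep.length_mul {x : W} (hx : cs.IsMinimalCosetRep J x) {v : W}
    (hv : v ∈ cs.parabolicSubgroup J) : ℓ (v * x) = ℓ v + ℓ x := by
  refine cs.parabolicSubgroup_induction_left (p := fun v => ℓ (v * x) = ℓ v + ℓ x) (by simp) ?_ hv
  intro i hi v hv ih
  have hx' : ¬cs.IsLeftInversion x (v⁻¹ * s i * v) := fun h =>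
    (hx _ (mul_mem (mul_mem (inv_mem hv) (cs.simple_mem_parabolicSubgroup hi)) hv)).not_gt h.2
  have hdesc : cs.IsLeftDescent (v * x) i ↔ cs.IsLeftDescent v i := by
    rw [← isLeftInversion_simple_iff_isLeftDescent, ← isLeftInversion_simple_iff_isLeftDescent,
      cs.isLeftInversion_mul_iff (cs.isReflection_simple i)]
    simp [Xor, hx']
  unfold IsLeftDescent at hdesc
  rw [mul_assoc]
  rcases cs.length_simple_mul (v * x) i with h | h <;>
    rcases cs.length_simple_mul v i with h' | h' <;> omega

theorem isMinimalCosetRep_inv_mul_of_maximal {u w : W} (hu : u ∈ cs.parabolicSubgroup J)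
    (hle : weakLE cs u w)
    (hmax : ∀ v ∈ cs.parabolicSubgroup J, weakLE cs v w → weakLE cs v u) :
    cs.IsMinimalCosetRep J (u⁻¹ * w) := by
  obtain ⟨v, hv, hmin⟩ := cs.exists_isMinimalCosetRep J (u⁻¹ * w)
  have hsplit : ℓ (u⁻¹ * w) = ℓ v + ℓ (v * (u⁻¹ * w)) := by
    simpa using hmin.length_mul (inv_mem hv)
  have hw : (u * v⁻¹)⁻¹ * w = v * (u⁻¹ * w) := by group
  have hle' : weakLE cs (u * v⁻¹) w := by
    have h₁ := cs.length_mul_le u v⁻¹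
    have h₂ := cs.length_mul_le (u * v⁻¹) (v * (u⁻¹ * w))
    rw [cs.length_inv] at h₁
    rw [show u * v⁻¹ * (v * (u⁻¹ * w)) = w by group] at h₂
    unfold weakLE at hle ⊢
    rw [hw]
    omega
  have hv1 : v = 1 := by
    have h := hmax _ (mul_mem hu (inv_mem hv)) hle'
    unfold weakLE at hle hle' h
    rw [show (u * v⁻¹)⁻¹ * u = v by group] at h
    rw [hw] at hle'
    exact cs.length_eq_zero_iff.mp (by omega)
  simpa [hv1] using hmin

end Parabolic

end CoxeterSystem

/-- If w_J is the maximal element of the standard parabolic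
subgroup W_J lying weakly below w, then inv(w_J) = inv(w) ∩ W_J. -/
theorem inversions_of_parabolic_projection {B W : Type*} [Group W]
    {M : CoxeterMatrix B} (cs : CoxeterSystem M W)
    (J : Set B) (w wJ : W)
    (hmem : wJ ∈ Subgroup.closure (cs.simple '' J))
    (hle : weakLE cs wJ w)
    (hmax : ∀ u ∈ Subgroup.closure (cs.simple '' J), weakLE cs u w → weakLE cs u wJ) :
    inversionSet cs wJ =
      inversionSet cs w ∩ (Subgroup.closure (cs.simple '' J) : Set W) := by
  have hx := cs.isMinimalCosetRep_inv_mul_of_maximal hmem hle hmax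
  have hlen : ∀ t ∈ cs.parabolicSubgroup J,
      cs.length (t * w) = cs.length (t * wJ) + cs.length (wJ⁻¹ * w) := fun t ht => by
    rw [← hx.length_mul (mul_mem ht hmem), mul_assoc, mul_inv_cancel_left]
  unfold weakLE at hle
  ext t
  constructor
  · rintro ⟨ht, hlt⟩
    have htJ := cs.mem_parabolicSubgroup_of_isLeftInversion hmem ⟨ht, hlt⟩
    exact ⟨⟨ht, by linarith [hlen t htJ]⟩, htJ⟩
  · rintro ⟨⟨ht, hlt⟩, htJ⟩
    exact ⟨ht, by linarith [hlen t htJ]⟩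
end

section
/- Let P be a poset and let C ⊆ P be a subset such that every w ∈ P has a maximum element π(w) among the elements of C weakly below w, and suppose the resulting map π : P → P is order-preserving. Let p : P → P be an order-preserving map satisfying: p(w) ≤ w for all w; p(p(w)) = p(w); the image p(P) is an order ideal of P; and C is closed under p (i.e., p(C) ⊆ C). Then π(p(w)) = p(π(w)) for all w ∈ P. -/
theorem map_eq_self_of_le_map {P : Type*} [PartialOrder P] {p : P → P}
    (hpidem : ∀ w, p (p w) = p w) (hideal : ∀ x y : P, y ≤ p x → y ∈ Set.range p)
    {x y : P} (h : y ≤ p x) : p y = y := by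
  obtain ⟨z, rfl⟩ := hideal x y h
  exact hpidem z

theorem projection_commutes_general {P : Type*} [PartialOrder P]
    (C : Set P) (π p : P → P)
    (hπC : ∀ w, π w ∈ C) (hπle : ∀ w, π w ≤ w)
    (hπmax : ∀ w, ∀ u ∈ C, u ≤ w → u ≤ π w)
    (hpmono : Monotone p) (hple : ∀ w, p w ≤ w)
    (hpidem : ∀ w, p (p w) = p w)
    (hideal : ∀ x y : P, y ≤ p x → y ∈ Set.range p)
    (hpC : ∀ x ∈ C, p x ∈ C) :
    ∀ w, π (p w) = p (π w) := by
  intro w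
  have hfix : p (π (p w)) = π (p w) :=
    map_eq_self_of_le_map hpidem hideal (x := p w) (by rw [hpidem]; exact hπle _)
  apply le_antisymm
  · calc π (p w) = p (π (p w)) := hfix.symm
      _ ≤ p (π w) := hpmono (hπmax w _ (hπC _) ((hπle _).trans (hple w)))
  · exact hπmax _ _ (hpC _ (hπC w)) (hpmono (hπle w))

/-- Abstract commutation of the sortable projection π with an
order-preserving, decreasing, idempotent projection p whose image is an order
ideal and which preserves C: π(p(w)) = p(π(w)). -/
theorem projection_commutes {P : Type*} [PartialOrder P]
    (C : Set P) (π p : P → P)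
    (hπC : ∀ w, π w ∈ C) (hπle : ∀ w, π w ≤ w)
    (hπmax : ∀ w, ∀ u ∈ C, u ≤ w → u ≤ π w)
    (hπmono : Monotone π)
    (hpmono : Monotone p) (hple : ∀ w, p w ≤ w)
    (hpidem : ∀ w, p (p w) = p w)
    (hideal : ∀ x y : P, y ≤ p x → y ∈ Set.range p)
    (hpC : ∀ x ∈ C, p x ∈ C) :
    ∀ w, π (p w) = p (π w) :=
  projection_commutes_general C π p hπC hπle hπmax hpmono hple hpidem hideal hpC
end
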